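/- arXiv:1712.08137 — 2 statements merged into one kernel-verified Lean document; each statement's English description precedes it below -/
import Mathlib

section
/- Let h > 0 be a real number. For every integer k̄ with 2w − 1 ≤ k̄ ≤ n one has ∑_{k=k̄}^{n} e^{−hk}·q̃^{(n)}(k) ≤ 4·e^{w}·(e^{−h}w)^{k̄}/k̄!. -/
open Finset

open scoped Classical

noncomputable section

namespace HScut

/-- Level of a jump path `s : Fin n → ℤ` at time `t` (sum of the first `t` jumps). -/
def levelAt (n : ℕ) (s : Fin n → ℤ) (t : ℕ) : ℤ :=
  ∑ i ∈ Finset.univ.filter (fun i : Fin n => (i : ℕ) < t), s i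

/-- Jump paths of length `n` with jumps of amplitude at most `m`. -/
def paths (n m : ℕ) : Finset (Fin n → ℤ) :=
  Fintype.piFinset fun _ => Finset.Icc (-(m : ℤ)) (m : ℤ)

/-- Weight `π(s) = ∏ q (s i)` of a jump path. -/
def pathWeight (n : ℕ) (q : ℤ → ℝ) (s : Fin n → ℤ) : ℝ :=
  ∏ i, q (s i)

/-- Modified weight `π̃(s)`, where each `q (±i)` (`i ≠ 0`) is replaced by `max (q i) (q (-i))`
(which equals `w_i / n`). -/
def modWeight (n : ℕ) (q : ℤ → ℝ) (s : Fin n → ℤ) : ℝ :=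
  ∏ i, (if s i = 0 then q 0 else max (q (s i)) (q (-s i)))

/-- `q^{(n)}(k)`: probability of a net balance of `k` cumulative jumps at maturity. -/
def qfull (n m : ℕ) (q : ℤ → ℝ) (k : ℤ) : ℝ :=
  ∑ s ∈ (paths n m).filter (fun s => levelAt n s n = k), pathWeight n q s

/-- `q̃^{(n)}(k)`: enlarged probability of a net balance of `k` cumulative jumps at maturity. -/
def qtilde (n m : ℕ) (q : ℤ → ℝ) (k : ℤ) : ℝ :=
  ∑ s ∈ (paths n m).filter (fun s => levelAt n s n = k), modWeight n q s

/-- `q^{k̄,(n)}(k)`: probability of a net balance of `k` jumps at maturity while reaching at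
some time a net balance higher than `k̄`. -/
def qup (n m : ℕ) (q : ℤ → ℝ) (kbar : ℕ) (k : ℤ) : ℝ :=
  ∑ s ∈ (paths n m).filter
      (fun s => levelAt n s n = k ∧ ∃ t ≤ n, (kbar : ℤ) + 1 ≤ levelAt n s t),
    pathWeight n q s

/-- `q_{l̄}^{(n)}(k)`: probability of a net balance of `k` jumps at maturity while reaching at
some time a net balance lower than `-l̄`. -/
def qdown (n m : ℕ) (q : ℤ → ℝ) (lbar : ℕ) (k : ℤ) : ℝ :=
  ∑ s ∈ (paths n m).filter
      (fun s => levelAt n s n = k ∧ ∃ t ≤ n, levelAt n s t ≤ -(lbar : ℤ) - 1),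
    pathWeight n q s

/-- `q^{cut,(n)}(k)`: probability of reaching level `k` at maturity without ever leaving the
band `[-l̄, k̄]`. -/
def qcut (n m : ℕ) (q : ℤ → ℝ) (kbar lbar : ℕ) (k : ℤ) : ℝ :=
  ∑ s ∈ (paths n m).filter
      (fun s => levelAt n s n = k ∧
        ∀ t ≤ n, -(lbar : ℤ) ≤ levelAt n s t ∧ levelAt n s t ≤ (kbar : ℤ)),
    pathWeight n q s

/-- `P(j) = C(n,j) p^j (1-p)^(n-j)`. -/
def binomP (n : ℕ) (p : ℝ) (j : ℕ) : ℝ :=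
  (n.choose j : ℝ) * p ^ j * (1 - p) ^ (n - j)

/-- Put payoff at the terminal node `(n, j, k)`. -/
def putPayoff (n : ℕ) (S0 K σ dt h : ℝ) (j : ℕ) (k : ℤ) : ℝ :=
  max (K - S0 * Real.exp ((2 * (j : ℝ) - (n : ℝ)) * (σ * Real.sqrt dt) + h * (k : ℝ))) 0

/-- European put value `V` on the full tree. -/
def Vput (n m : ℕ) (q : ℤ → ℝ) (p S0 K σ τ h r : ℝ) : ℝ :=
  Real.exp (-(r * τ)) *
    ∑ k ∈ Finset.Icc (-((m : ℤ) * n)) ((m : ℤ) * n), ∑ j ∈ Finset.range (n + 1),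
      putPayoff n S0 K σ (τ / n) h j k * binomP n p j * qfull n m q k

/-- European put value `V^{TT}` on the truncated tree. -/
def VTT (n m : ℕ) (q : ℤ → ℝ) (p S0 K σ τ h r : ℝ) (kbar lbar : ℕ) : ℝ :=
  Real.exp (-(r * τ)) *
    ∑ k ∈ Finset.Icc (-(lbar : ℤ)) (kbar : ℤ), ∑ j ∈ Finset.range (n + 1),
      putPayoff n S0 K σ (τ / n) h j k * binomP n p j * qcut n m q kbar lbar k

/-- The sequence `W_i`: `W₁ = w₁`, `W_{i+1} = w_{i+1} + W_i^{(i+1)/i}` (real powers). -/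
def Wseq (w : ℕ → ℝ) : ℕ → ℝ
  | 0 => 0
  | 1 => w 1
  | (i + 2) => w (i + 2) + Wseq w (i + 1) ^ (((i : ℝ) + 2) / ((i : ℝ) + 1))

/-- `M_i = max { W_i, W_i^{(1-i)/i} }` (real powers). -/
def Mseq (w : ℕ → ℝ) (i : ℕ) : ℝ :=
  max (Wseq w i) (Wseq w i ^ ((1 - (i : ℝ)) / (i : ℝ)))

/-- `G = 2 m max{W_m, 1} e^{W_m} ∏_{i=1}^{m-1} M_i²`. -/
def Gconst (w : ℕ → ℝ) (m : ℕ) : ℝ :=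
  2 * m * max (Wseq w m) 1 * Real.exp (Wseq w m) * ∏ i ∈ Finset.Icc 1 (m - 1), (Mseq w i) ^ 2

/-- Value of the underlying at a node with (real) time index `i`, `j` up Brownian moves and
net jump level `l`. -/
def Sval (S0 σ dt h : ℝ) (i : ℝ) (j : ℕ) (l : ℤ) : ℝ :=
  S0 * Real.exp ((2 * (j : ℝ) - i) * (σ * Real.sqrt dt) + (l : ℝ) * h)

/-- Full backward European put price; `VEfull … d j l` is the value `V_E(n-d, j, l)`
(`d` = number of remaining steps). -/
def VEfull (n m : ℕ) (q : ℤ → ℝ) (p dt S0 K σ h r : ℝ) : ℕ → ℕ → ℤ → ℝ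
  | 0, j, l => max (K - Sval S0 σ dt h (n : ℝ) j l) 0
  | (d + 1), j, l =>
      Real.exp (-(r * dt)) *
        ∑ k ∈ Finset.Icc (-(m : ℤ)) (m : ℤ),
          (VEfull n m q p dt S0 K σ h r d (j + 1) (l + k) * p +
            VEfull n m q p dt S0 K σ h r d j (l + k) * (1 - p)) * q k

/-- Full backward American put price; `VAfull … d j l` is the value `V_A(n-d, j, l)`. -/
def VAfull (n m : ℕ) (q : ℤ → ℝ) (p dt S0 K σ h r : ℝ) : ℕ → ℕ → ℤ → ℝ
  | 0, j, l => max (K - Sval S0 σ dt h (n : ℝ) j l) 0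
  | (d + 1), j, l =>
      max
        (Real.exp (-(r * dt)) *
          ∑ k ∈ Finset.Icc (-(m : ℤ)) (m : ℤ),
            (VAfull n m q p dt S0 K σ h r d (j + 1) (l + k) * p +
              VAfull n m q p dt S0 K σ h r d j (l + k) * (1 - p)) * q k)
        (K - Sval S0 σ dt h ((n : ℝ) - (d + 1)) j l)

/-- Truncated backward European put price with boundary value `b`;
`VEtr … d j l` is the value `V_E^b(n-d, j, l)`. -/
def VEtr (n m : ℕ) (q : ℤ → ℝ) (p dt S0 K σ h r b : ℝ) (kbar lbar : ℕ) :
    ℕ → ℕ → ℤ → ℝ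
  | 0, j, l =>
      if -(lbar : ℤ) ≤ l ∧ l ≤ (kbar : ℤ) then max (K - Sval S0 σ dt h (n : ℝ) j l) 0 else b
  | (d + 1), j, l =>
      if -(lbar : ℤ) ≤ l ∧ l ≤ (kbar : ℤ) then
        Real.exp (-(r * dt)) *
          ∑ k ∈ Finset.Icc (-(m : ℤ)) (m : ℤ),
            (VEtr n m q p dt S0 K σ h r b kbar lbar d (j + 1) (l + k) * p +
              VEtr n m q p dt S0 K σ h r b kbar lbar d j (l + k) * (1 - p)) * q k
      else b

/-- Truncated backward American put price with boundary value `b`;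
`VAtr … d j l` is the value `V_A^b(n-d, j, l)`. -/
def VAtr (n m : ℕ) (q : ℤ → ℝ) (p dt S0 K σ h r b : ℝ) (kbar lbar : ℕ) :
    ℕ → ℕ → ℤ → ℝ
  | 0, j, l =>
      if -(lbar : ℤ) ≤ l ∧ l ≤ (kbar : ℤ) then max (K - Sval S0 σ dt h (n : ℝ) j l) 0 else b
  | (d + 1), j, l =>
      if -(lbar : ℤ) ≤ l ∧ l ≤ (kbar : ℤ) then
        max
          (Real.exp (-(r * dt)) *
            ∑ k ∈ Finset.Icc (-(m : ℤ)) (m : ℤ),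
              (VAtr n m q p dt S0 K σ h r b kbar lbar d (j + 1) (l + k) * p +
                VAtr n m q p dt S0 K σ h r b kbar lbar d j (l + k) * (1 - p)) * q k)
          (K - Sval S0 σ dt h ((n : ℝ) - (d + 1)) j l)
      else b

/-- The sum, over all jump-path prefixes that first exit the band `[-l̄, k̄]` at some time
`1 ≤ i ≤ n`, of the prefix probability times `b e^{-r i Δt}`. -/
def exitSum (n m : ℕ) (q : ℤ → ℝ) (r dt : ℝ) (kbar lbar : ℕ) (b : ℝ) : ℝ :=
  ∑ i ∈ Finset.Icc 1 n,
    ∑ y ∈ (paths i m).filter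
        (fun y =>
          (∀ t < i, -(lbar : ℤ) ≤ levelAt i y t ∧ levelAt i y t ≤ (kbar : ℤ)) ∧
          ¬(-(lbar : ℤ) ≤ levelAt i y i ∧ levelAt i y i ≤ (kbar : ℤ))),
      pathWeight i q y * (b * Real.exp (-(r * (i : ℝ) * dt)))

end HScut

open HScut

/-! Write `a = max (q 1) (q (-1))`. A unit-jump path ending at level `k ≥ 0` with `j` down-jumps
has `k + j` up-jumps, so its modified weight is at most `a ^ (k + 2 j)`, and it is determined by
its sets of up- and down-jumps. Hence `q̃(k) ≤ ∑ⱼ C(n, k + j) C(n, j) a ^ (k + 2 j)`, which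
`C(n, r) ≤ n ^ r / r!` and `k! (k + 1) ^ j ≤ (k + j)!` bound by `w ^ k / k! · exp (w² / (k + 1))`,
and `2 w ≤ k + 1` turns the exponential into `e ^ (w / 2)`. The same condition makes consecutive
terms of `∑_{k ≥ k̄} (e ^ (-h) w) ^ k / k!` shrink by a factor `1 / 2`, costing one more factor `2`.
-/

open scoped Nat

lemma pow_div_factorial_add_le {c : ℝ} (hc : 0 ≤ c) (k i : ℕ) :
    c ^ (k + i) / (k + i)! ≤ c ^ k / k ! * (c / (k + 1)) ^ i := by
  have hfact : (k ! * (k + 1) ^ i : ℝ) ≤ (k + i)! := by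
    exact_mod_cast Nat.factorial_mul_pow_le_factorial
  calc c ^ (k + i) / (k + i)! ≤ c ^ (k + i) / (k ! * (k + 1) ^ i) := by gcongr
    _ = c ^ k / k ! * (c / (k + 1)) ^ i := by rw [pow_add, div_pow]; field_simp

lemma choose_mul_choose_mul_pow_le (n k j : ℕ) {a : ℝ} (ha : 0 ≤ a) :
    ((n.choose (k + j) * n.choose j : ℕ) : ℝ) * a ^ (k + 2 * j) ≤
      (n * a) ^ k / k ! * (((n * a) ^ 2 / (k + 1)) ^ j / j !) := by
  have hna : 0 ≤ (n * a : ℝ) := by positivity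
  calc ((n.choose (k + j) * n.choose j : ℕ) : ℝ) * a ^ (k + 2 * j)
      ≤ (n ^ (k + j) / (k + j)! * (n ^ j / j !)) * a ^ (k + 2 * j) := by
        push_cast
        gcongr <;> exact Nat.choose_le_pow_div _ _
    _ = (n * a) ^ (k + j) / (k + j)! * ((n * a) ^ j / j !) := by
        rw [mul_pow, mul_pow, show k + 2 * j = (k + j) + j by ring, pow_add a]
        ring
    _ ≤ (n * a) ^ k / k ! * (n * a / (k + 1)) ^ j * ((n * a) ^ j / j !) := by
        gcongr
        exact pow_div_factorial_add_le hna k j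
    _ = (n * a) ^ k / k ! * (((n * a) ^ 2 / (k + 1)) ^ j / j !) := by
        rw [div_pow, div_pow, ← pow_mul]
        ring

lemma sum_choose_mul_choose_mul_pow_le (n k N : ℕ) {a : ℝ} (ha : 0 ≤ a) :
    ∑ j ∈ Finset.range N, ((n.choose (k + j) * n.choose j : ℕ) : ℝ) * a ^ (k + 2 * j) ≤
      (n * a) ^ k / k ! * Real.exp ((n * a) ^ 2 / (k + 1)) := by
  calc _ ≤ ∑ j ∈ Finset.range N, (n * a) ^ k / k ! * (((n * a) ^ 2 / (k + 1)) ^ j / j !) :=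
        Finset.sum_le_sum fun j _ => choose_mul_choose_mul_pow_le n k j ha
    _ ≤ _ := by
        rw [← Finset.mul_sum]
        gcongr
        exact Real.sum_le_exp_of_nonneg (by positivity) _

lemma sum_Icc_pow_div_factorial_le {c : ℝ} (hc : 0 ≤ c) {k : ℕ} (hck : 2 * c ≤ k + 1) (N : ℕ) :
    ∑ i ∈ Finset.Icc k N, c ^ i / i ! ≤ 2 * (c ^ k / k !) := by
  have hratio : c / (k + 1) ≤ 1 / 2 := by
    rw [div_le_div_iff₀ (by positivity) two_pos]
    linarith
  rw [← Finset.Ico_add_one_right_eq_Icc, Finset.sum_Ico_eq_sum_range]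
  calc _ ≤ ∑ i ∈ Finset.range (N + 1 - k), c ^ k / k ! * (1 / 2) ^ i :=
        Finset.sum_le_sum fun i _ => (pow_div_factorial_add_le hc k i).trans (by gcongr)
    _ ≤ c ^ k / k ! * 2 := by
        rw [← Finset.mul_sum]
        gcongr
        exact sum_geometric_two_le _
    _ = 2 * (c ^ k / k !) := mul_comm _ _

namespace HScut

variable {n : ℕ}

def upJumps (s : Fin n → ℤ) : Finset (Fin n) := {i | s i = 1}

def downJumps (s : Fin n → ℤ) : Finset (Fin n) := {i | s i = -1}

lemma mem_paths_one {s : Fin n → ℤ} : s ∈ paths n 1 ↔ ∀ i, s i = -1 ∨ s i = 0 ∨ s i = 1 := by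
  simp only [paths, Fintype.mem_piFinset, Finset.mem_Icc, Nat.cast_one]
  exact forall_congr' fun i => by omega

lemma levelAt_self (s : Fin n → ℤ) : levelAt n s n = ∑ i, s i := by
  simp [levelAt]

lemma sum_eq_card_upJumps_sub_card_downJumps {s : Fin n → ℤ} (hs : s ∈ paths n 1) :
    ∑ i, s i = #(upJumps s) - #(downJumps s) := by
  have hs_split : ∀ i, s i = (if s i = 1 then 1 else 0) - (if s i = -1 then 1 else 0) := fun i => by
    rcases mem_paths_one.1 hs i with h | h | h <;> simp [h]
  rw [sum_congr rfl fun i _ => hs_split i, sum_sub_distrib, sum_boole, sum_boole]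
  rfl

lemma disjoint_upJumps_downJumps (s : Fin n → ℤ) : Disjoint (upJumps s) (downJumps s) := by
  rw [disjoint_left]
  intro i hup hdown
  simp only [upJumps, downJumps, mem_filter] at hup hdown
  omega

lemma injOn_upJumps_downJumps :
    Set.InjOn (fun s : Fin n → ℤ => (upJumps s, downJumps s)) (paths n 1) := by
  intro s hs s' hs' heq
  simp only [Prod.mk.injEq, Finset.ext_iff, upJumps, downJumps, mem_filter, mem_univ,
    true_and] at heq
  funext i
  have := heq.1 i
  have := heq.2 i
  rcases mem_paths_one.1 hs i with h | h | h <;>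
    rcases mem_paths_one.1 hs' i with h' | h' | h' <;> simp_all

lemma modWeight_le_pow {q : ℤ → ℝ} (hq0 : 0 ≤ q 0) (hq0_le : q 0 ≤ 1) (hq1 : 0 ≤ q 1)
    {s : Fin n → ℤ} (hs : s ∈ paths n 1) :
    modWeight n q s ≤ max (q 1) (q (-1)) ^ (#(upJumps s) + #(downJumps s)) := by
  set a := max (q 1) (q (-1))
  have ha : 0 ≤ a := hq1.trans (le_max_left _ _)
  calc modWeight n q s ≤ ∏ i, if i ∈ upJumps s ∪ downJumps s then a else 1 := by
        refine prod_le_prod (fun i _ => ?_) (fun i _ => ?_) <;>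
          rcases mem_paths_one.1 hs i with h | h | h <;>
          simp [h, upJumps, downJumps, a, hq0, hq0_le, ha, max_comm]
    _ = a ^ (#(upJumps s) + #(downJumps s)) := by
        rw [prod_ite_mem, univ_inter, prod_const, card_union_of_disjoint
          (disjoint_upJumps_downJumps s)]

lemma card_filter_card_downJumps_le (k j : ℕ) :
    #{s ∈ (paths n 1).filter (fun s => levelAt n s n = k) | #(downJumps s) = j} ≤
      n.choose (k + j) * n.choose j := by
  have hcard : #(powersetCard (k + j) (univ : Finset (Fin n)) ×ˢ
      powersetCard j (univ : Finset (Fin n))) = n.choose (k + j) * n.choose j := by simp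
  refine hcard ▸ card_le_card_of_injOn (fun s => (upJumps s, downJumps s)) (fun s hs => ?_)
    (injOn_upJumps_downJumps.mono fun s hs => (mem_filter.1 (mem_filter.1 hs).1).1)
  simp only [mem_coe, mem_filter, levelAt_self] at hs
  obtain ⟨⟨hs, hlevel⟩, hdown⟩ := hs
  rw [sum_eq_card_upJumps_sub_card_downJumps hs] at hlevel
  simp only [coe_product, Set.mem_prod, mem_coe, mem_powersetCard, subset_univ, true_and]
  omega

lemma qtilde_one_le_sum_choose {q : ℤ → ℝ} (hq0 : 0 ≤ q 0) (hq0_le : q 0 ≤ 1) (hq1 : 0 ≤ q 1)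
    (k : ℕ) :
    qtilde n 1 q k ≤ ∑ j ∈ range (n + 1),
      ((n.choose (k + j) * n.choose j : ℕ) : ℝ) * max (q 1) (q (-1)) ^ (k + 2 * j) := by
  set a := max (q 1) (q (-1))
  set A := (paths n 1).filter (fun s => levelAt n s n = k)
  have hcard_up : ∀ s ∈ A, #(upJumps s) = #(downJumps s) + k := fun s hs => by
    obtain ⟨hs, hlevel⟩ := mem_filter.1 hs
    rw [levelAt_self, sum_eq_card_upJumps_sub_card_downJumps hs] at hlevel
    omega
  calc qtilde n 1 q k ≤ ∑ s ∈ A, a ^ (k + 2 * #(downJumps s)) :=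
        sum_le_sum fun s hs => (modWeight_le_pow hq0 hq0_le hq1 (mem_filter.1 hs).1).trans_eq
          (by rw [hcard_up s hs]; exact congrArg _ (by ring))
    _ = ∑ j ∈ range (n + 1), ∑ s ∈ A with #(downJumps s) = j, a ^ (k + 2 * #(downJumps s)) :=
        (sum_fiberwise_of_maps_to (fun s _ => mem_range.2 (Nat.lt_succ_of_le
          ((card_le_univ _).trans_eq (Fintype.card_fin n)))) _).symm
    _ = ∑ j ∈ range (n + 1), (#{s ∈ A | #(downJumps s) = j} : ℝ) * a ^ (k + 2 * j) :=
        sum_congr rfl fun j _ => by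
          rw [sum_congr rfl fun s hs => by rw [(mem_filter.1 hs).2], sum_const, nsmul_eq_mul]
    _ ≤ _ := sum_le_sum fun j _ => by
        gcongr
        exact_mod_cast card_filter_card_downJumps_le k j

lemma qtilde_one_le {q : ℤ → ℝ} (hq0 : 0 ≤ q 0) (hq0_le : q 0 ≤ 1) (hq1 : 0 ≤ q 1) (k : ℕ) :
    qtilde n 1 q k ≤ ((n : ℝ) * max (q 1) (q (-1))) ^ k / k ! *
      Real.exp (((n : ℝ) * max (q 1) (q (-1))) ^ 2 / (k + 1)) :=
  (qtilde_one_le_sum_choose hq0 hq0_le hq1 k).trans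
    (sum_choose_mul_choose_mul_pow_le n k _ (hq1.trans (le_max_left _ _)))

end HScut

theorem qtilde_negexp_tail_sum_bound_general (n : ℕ) (q : ℤ → ℝ)
    (hqm : 0 ≤ q (-1)) (hq0 : 0 ≤ q 0) (hqp : 0 ≤ q 1)
    (hsum : q (-1) + q 0 + q 1 = 1)
    (w : ℝ) (hw : w = (n : ℝ) * max (q 1) (q (-1)))
    (h : ℝ) (hh : 0 < h)
    (kbar : ℕ) (hk1 : 2 * w - 1 ≤ (kbar : ℝ)) :
    (∑ k ∈ Finset.Icc kbar n, Real.exp (-(h * (k : ℝ))) * qtilde n 1 q (k : ℤ)) ≤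
      4 * Real.exp w * (Real.exp (-h) * w) ^ kbar / (Nat.factorial kbar : ℝ) := by
  have hw0 : 0 ≤ w := hw ▸ mul_nonneg n.cast_nonneg (hqp.trans (le_max_left _ _))
  set c := Real.exp (-h) * w
  have hc0 : 0 ≤ c := by positivity
  have hcw : c ≤ w := mul_le_of_le_one_left hw0 (Real.exp_le_one_iff.2 (by linarith))
  have hterm : ∀ k ∈ Finset.Icc kbar n,
      Real.exp (-(h * k)) * qtilde n 1 q k ≤ Real.exp (w / 2) * (c ^ k / k !) := by
    intro k hk
    have hwk : w ^ 2 / (k + 1) ≤ w / 2 := by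
      have : (kbar : ℝ) ≤ k := by exact_mod_cast (Finset.mem_Icc.1 hk).1
      rw [div_le_div_iff₀ (by positivity) two_pos]
      nlinarith
    calc Real.exp (-(h * k)) * qtilde n 1 q k
        ≤ Real.exp (-(h * k)) * (w ^ k / k ! * Real.exp (w ^ 2 / (k + 1))) := by
          rw [hw]
          gcongr
          exact qtilde_one_le hq0 (by linarith) hqp k
      _ ≤ Real.exp (-(h * k)) * (w ^ k / k ! * Real.exp (w / 2)) := by gcongr
      _ = Real.exp (w / 2) * (c ^ k / k !) := by
          rw [mul_pow, ← Real.exp_nat_mul, show (k : ℝ) * -h = -(h * k) by ring]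
          ring
  calc _ ≤ ∑ k ∈ Finset.Icc kbar n, Real.exp (w / 2) * (c ^ k / k !) := Finset.sum_le_sum hterm
    _ = Real.exp (w / 2) * ∑ k ∈ Finset.Icc kbar n, c ^ k / k ! := (Finset.mul_sum ..).symm
    _ ≤ Real.exp w * (2 * (c ^ kbar / kbar !)) := by
        gcongr
        · linarith
        · exact sum_Icc_pow_div_factorial_le hc0 (by linarith) n
    _ ≤ 4 * Real.exp w * c ^ kbar / kbar ! := by
        have : 0 ≤ c ^ kbar / kbar ! := by positivity
        rw [mul_div_assoc]
        nlinarith [Real.exp_pos w]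

/-- For `h > 0` and every integer `k̄` with `2w − 1 ≤ k̄ ≤ n` one has
`∑_{k=k̄}^{n} e^{−hk} q̃^{(n)}(k) ≤ 4 e^w (e^{−h} w)^{k̄} / k̄!`. -/
theorem qtilde_negexp_tail_sum_bound (n : ℕ) (hn : 1 ≤ n) (q : ℤ → ℝ)
    (hqm : 0 ≤ q (-1)) (hq0 : 0 ≤ q 0) (hqp : 0 ≤ q 1)
    (hsum : q (-1) + q 0 + q 1 = 1)
    (w : ℝ) (hw : w = (n : ℝ) * max (q 1) (q (-1)))
    (h : ℝ) (hh : 0 < h)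
    (kbar : ℕ) (hk1 : 2 * w - 1 ≤ (kbar : ℝ)) (hk2 : kbar ≤ n) :
    (∑ k ∈ Finset.Icc kbar n, Real.exp (-(h * (k : ℝ))) * qtilde n 1 q (k : ℤ)) ≤
      4 * Real.exp w * (Real.exp (-h) * w) ^ kbar / (Nat.factorial kbar : ℝ) :=
  qtilde_negexp_tail_sum_bound_general n q hqm hq0 hqp hsum w hw h hh kbar hk1
end
end

section
/- Let k̄ and l̄ be nonnegative integers and let k be an integer with −l̄ ≤ k ≤ k̄. Then q^{k̄,(n)}(k) ≤ ∑_{i=1}^{m} q̃^{(n)}(2k̄ − k + 2i) and q_{l̄}^{(n)}(k) ≤ ∑_{i=1}^{m} q̃^{(n)}(2l̄ + k + 2i). -/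
open Finset

open scoped Classical

noncomputable section

open HScut

/-!
Reflection principle. A path that climbs above `k̄` does so for the first time at a level
`k̄ + i` with `1 ≤ i ≤ m`, because no jump exceeds `m`. Negating every jump after that first
passage time sends the final level `k` to `2 (k̄ + i) - k`, and it keeps the first passage time,
so it is an involution on such paths, hence injective. It only exchanges factors `q j` and
`q (-j)`, and `π̃` dominates both, so `π(s) ≤ π̃(s) = π̃(reflected s)`. The bound below `-l̄`
is the same statement for the mirrored jump law `l ↦ q (-l)`.
-/

namespace HScut

section Level

variable {n : ℕ}

lemma levelAt_zero (s : Fin n → ℤ) : levelAt n s 0 = 0 := by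
  simp [levelAt]

lemma levelAt_succ (s : Fin n → ℤ) {t : ℕ} (ht : t < n) :
    levelAt n s (t + 1) = levelAt n s t + s ⟨t, ht⟩ := by
  have hfilter : univ.filter (fun i : Fin n => (i : ℕ) < t + 1)
      = insert ⟨t, ht⟩ (univ.filter fun i : Fin n => (i : ℕ) < t) := by
    ext i
    simp only [mem_filter, mem_univ, true_and, mem_insert, Fin.ext_iff]
    omega
  rw [levelAt, hfilter, sum_insert (by simp), add_comm, levelAt]

lemma levelAt_congr {s s' : Fin n → ℤ} {t : ℕ} (h : ∀ i : Fin n, (i : ℕ) < t → s i = s' i) :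
    levelAt n s t = levelAt n s' t :=
  sum_congr rfl fun i hi => h i (by simpa using hi)

lemma levelAt_neg (s : Fin n → ℤ) (t : ℕ) : levelAt n (-s) t = -levelAt n s t := by
  simp [levelAt]

lemma levelAt_eq_add_sum {s : Fin n → ℤ} {a b : ℕ} (h : a ≤ b) :
    levelAt n s b = levelAt n s a +
      ∑ i ∈ univ.filter (fun i : Fin n => a ≤ (i : ℕ) ∧ (i : ℕ) < b), s i := by
  rw [levelAt, levelAt, ← sum_union (disjoint_filter.2 fun i _ _ => by omega)]
  exact sum_congr (by ext i; simp only [mem_filter, mem_union, mem_univ, true_and]; omega)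
    fun _ _ => rfl

lemma mem_paths_iff {m : ℕ} {s : Fin n → ℤ} :
    s ∈ paths n m ↔ ∀ i, -(m : ℤ) ≤ s i ∧ s i ≤ m := by
  simp [paths, Fintype.mem_piFinset]

lemma neg_mem_paths_iff {m : ℕ} {s : Fin n → ℤ} : -s ∈ paths n m ↔ s ∈ paths n m := by
  simp only [mem_paths_iff, Pi.neg_apply]
  exact forall_congr' fun _ => by omega

end Level

section Flip

variable {n : ℕ} {τ : ℕ} {s : Fin n → ℤ}

def flipFrom (τ : ℕ) (s : Fin n → ℤ) : Fin n → ℤ :=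
  fun i => if (i : ℕ) < τ then s i else -s i

lemma flipFrom_flipFrom : flipFrom τ (flipFrom τ s) = s := by
  funext i
  by_cases hi : (i : ℕ) < τ <;> simp [flipFrom, hi]

lemma levelAt_flipFrom_of_le {t : ℕ} (h : t ≤ τ) : levelAt n (flipFrom τ s) t = levelAt n s t :=
  levelAt_congr fun _ hi => if_pos (lt_of_lt_of_le hi h)

lemma levelAt_flipFrom_of_ge {t : ℕ} (h : τ ≤ t) :
    levelAt n (flipFrom τ s) t = 2 * levelAt n s τ - levelAt n s t := by
  have hflip : ∑ i ∈ univ.filter (fun i : Fin n => τ ≤ (i : ℕ) ∧ (i : ℕ) < t), flipFrom τ s i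
      = -∑ i ∈ univ.filter (fun i : Fin n => τ ≤ (i : ℕ) ∧ (i : ℕ) < t), s i := by
    rw [← sum_neg_distrib]
    refine sum_congr rfl fun i hi => if_neg ?_
    simp only [mem_filter, mem_univ, true_and] at hi
    omega
  rw [levelAt_eq_add_sum h, levelAt_eq_add_sum (s := s) h, levelAt_flipFrom_of_le le_rfl, hflip]
  ring

lemma flipFrom_mem_paths {m : ℕ} (hs : s ∈ paths n m) : flipFrom τ s ∈ paths n m := by
  rw [mem_paths_iff] at hs ⊢
  intro i
  by_cases hi : (i : ℕ) < τ
  · simpa [flipFrom, hi] using hs i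
  · simp only [flipFrom, hi, if_false]
    have := hs i
    omega

lemma modWeight_flipFrom (q : ℤ → ℝ) : modWeight n q (flipFrom τ s) = modWeight n q s := by
  refine prod_congr rfl fun i _ => ?_
  by_cases hi : (i : ℕ) < τ
  · simp [flipFrom, hi]
  · by_cases h0 : s i = 0
    · simp [flipFrom, hi, h0]
    · simp [flipFrom, hi, h0, max_comm]

end Flip

section FirstPassage

variable {n : ℕ} {c : ℤ} {s : Fin n → ℤ} {τ : ℕ}

def IsFirstPassage (n : ℕ) (c : ℤ) (s : Fin n → ℤ) (τ : ℕ) : Prop :=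
  τ ≤ n ∧ c ≤ levelAt n s τ ∧ ∀ t < τ, levelAt n s t < c

lemma exists_isFirstPassage (h : ∃ t ≤ n, c ≤ levelAt n s t) :
    ∃ τ, IsFirstPassage n c s τ := by
  refine ⟨Nat.find h, (Nat.find_spec h).1, (Nat.find_spec h).2, fun t ht => ?_⟩
  have hmin := Nat.find_min h ht
  have := (Nat.find_spec h).1
  push Not at hmin
  exact hmin (by omega)

lemma IsFirstPassage.unique {τ' : ℕ} (h : IsFirstPassage n c s τ)
    (h' : IsFirstPassage n c s τ') : τ = τ' := by
  by_contra hne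
  rcases Nat.lt_or_gt_of_ne hne with hlt | hlt
  · exact (h'.2.2 τ hlt).not_ge h.2.1
  · exact (h.2.2 τ' hlt).not_ge h'.2.1

lemma IsFirstPassage.flipFrom (h : IsFirstPassage n c s τ) :
    IsFirstPassage n c (flipFrom τ s) τ := by
  refine ⟨h.1, ?_, fun t ht => ?_⟩
  · rw [levelAt_flipFrom_of_le le_rfl]
    exact h.2.1
  · rw [levelAt_flipFrom_of_le ht.le]
    exact h.2.2 t ht

/-- The level starts below `c`, so the first passage overshoots `c` by less than one jump. -/
lemma IsFirstPassage.levelAt_le {m : ℕ} (h : IsFirstPassage n c s τ) (hc : 0 < c)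
    (hs : s ∈ paths n m) : levelAt n s τ ≤ c - 1 + m := by
  obtain ⟨hτn, hcτ, hbelow⟩ := h
  obtain ⟨t, rfl⟩ : ∃ t, τ = t + 1 := Nat.exists_eq_succ_of_ne_zero fun h0 => by
    rw [h0, levelAt_zero] at hcτ
    omega
  rw [levelAt_succ s (by omega)]
  have := hbelow t (by omega)
  have := (mem_paths_iff.1 hs ⟨t, by omega⟩).2
  omega

def reflectAt (c : ℤ) (s : Fin n → ℤ) : Fin n → ℤ :=
  if h : ∃ τ, IsFirstPassage n c s τ then flipFrom h.choose s else s

lemma reflectAt_eq (h : IsFirstPassage n c s τ) : reflectAt c s = flipFrom τ s := by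
  have hex : ∃ τ, IsFirstPassage n c s τ := ⟨τ, h⟩
  rw [reflectAt, dif_pos hex, hex.choose_spec.unique h]

lemma reflectAt_reflectAt (h : IsFirstPassage n c s τ) : reflectAt c (reflectAt c s) = s := by
  rw [reflectAt_eq h, reflectAt_eq h.flipFrom, flipFrom_flipFrom]

end FirstPassage

section Weights

variable {n m : ℕ} {q : ℤ → ℝ} {s : Fin n → ℤ}

lemma pathWeight_le_modWeight (hq : ∀ l : ℤ, -(m : ℤ) ≤ l → l ≤ (m : ℤ) → 0 ≤ q l)
    (hs : s ∈ paths n m) : pathWeight n q s ≤ modWeight n q s := by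
  rw [mem_paths_iff] at hs
  refine prod_le_prod (fun i _ => hq _ (hs i).1 (hs i).2) fun i _ => ?_
  by_cases h : s i = 0 <;> simp [h]

lemma modWeight_nonneg (hq : ∀ l : ℤ, -(m : ℤ) ≤ l → l ≤ (m : ℤ) → 0 ≤ q l)
    (hs : s ∈ paths n m) : 0 ≤ modWeight n q s :=
  (prod_nonneg fun i _ => hq _ ((mem_paths_iff.1 hs) i).1 ((mem_paths_iff.1 hs) i).2).trans
    (pathWeight_le_modWeight hq hs)

lemma sum_qtilde_eq (S : Finset ℤ) :
    ∑ j ∈ S, qtilde n m q j = ∑ s ∈ paths n m with levelAt n s n ∈ S, modWeight n q s := by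
  simp only [qtilde, sum_filter]
  rw [sum_comm]
  exact sum_congr rfl fun s _ => by simp [sum_ite_eq]

lemma qtilde_comp_neg (k : ℤ) : qtilde n m (fun l => q (-l)) k = qtilde n m q k := by
  refine sum_congr rfl fun s _ => prod_congr rfl fun i _ => ?_
  by_cases h : s i = 0
  · simp [h]
  · simp [h, max_comm]

lemma qdown_eq_qup_comp_neg (lbar : ℕ) (k : ℤ) :
    qdown n m q lbar k = qup n m (fun l => q (-l)) lbar (-k) := by
  refine sum_equiv (Equiv.neg _) (fun s => ?_) fun s _ => ?_
  · simp only [mem_filter, Equiv.neg_apply, neg_mem_paths_iff, levelAt_neg]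
    refine and_congr_right fun _ => and_congr (by omega) (exists_congr fun t => ?_)
    exact and_congr_right fun _ => by omega
  · simp [pathWeight]

end Weights

theorem qup_le_sum_qtilde {n m : ℕ} {q : ℤ → ℝ}
    (hq : ∀ l : ℤ, -(m : ℤ) ≤ l → l ≤ (m : ℤ) → 0 ≤ q l) (kbar : ℕ) (k : ℤ) :
    qup n m q kbar k ≤
      ∑ i ∈ Icc 1 m, qtilde n m q (2 * (kbar : ℤ) - k + 2 * (i : ℤ)) := by
  set c : ℤ := kbar + 1
  set D := (paths n m).filter fun s => levelAt n s n = k ∧ ∃ t ≤ n, c ≤ levelAt n s t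
  have hpassage : ∀ s ∈ D, ∃ τ, IsFirstPassage n c s τ := fun s hs =>
    exists_isFirstPassage (mem_filter.1 hs).2.2
  have hinj : Set.InjOn (reflectAt c) (D : Set (Fin n → ℤ)) := by
    intro s hs s' hs' h
    obtain ⟨τ, hτ⟩ := hpassage s hs
    obtain ⟨τ', hτ'⟩ := hpassage s' hs'
    rw [← reflectAt_reflectAt hτ, ← reflectAt_reflectAt hτ', h]
  have hmaps : D.image (reflectAt c) ⊆ (paths n m).filter fun t =>
      levelAt n t n ∈ (Icc 1 m).image fun i : ℕ => 2 * (kbar : ℤ) - k + 2 * (i : ℤ) := by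
    simp only [subset_iff, mem_image, mem_filter]
    rintro _ ⟨s, hs, rfl⟩
    obtain ⟨τ, hτ⟩ := hpassage s hs
    obtain ⟨hsp, hsk, -⟩ := mem_filter.1 hs
    have hle := hτ.levelAt_le (by omega) hsp
    rw [reflectAt_eq hτ, levelAt_flipFrom_of_ge hτ.1, hsk]
    refine ⟨flipFrom_mem_paths hsp, (levelAt n s τ - kbar).toNat, mem_Icc.2 ⟨?_, ?_⟩, ?_⟩ <;>
      have := hτ.2.1 <;> omega
  rw [← sum_image fun i _ j _ h => by simpa using h, sum_qtilde_eq]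
  calc qup n m q kbar k = ∑ s ∈ D, pathWeight n q s := rfl
    _ ≤ ∑ s ∈ D, modWeight n q (reflectAt c s) := sum_le_sum fun s hs => by
        obtain ⟨τ, hτ⟩ := hpassage s hs
        rw [reflectAt_eq hτ, modWeight_flipFrom]
        exact pathWeight_le_modWeight hq (mem_filter.1 hs).1
    _ = ∑ t ∈ D.image (reflectAt c), modWeight n q t := (sum_image hinj).symm
    _ ≤ _ := sum_le_sum_of_subset_of_nonneg hmaps fun t ht _ =>
        modWeight_nonneg hq (mem_filter.1 ht).1

end HScut

theorem reflection_bound_general (n m : ℕ) (q : ℤ → ℝ)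
    (hq : ∀ l : ℤ, -(m : ℤ) ≤ l → l ≤ (m : ℤ) → 0 ≤ q l)
    (kbar lbar : ℕ) (k : ℤ) :
    qup n m q kbar k ≤
        ∑ i ∈ Finset.Icc 1 m, qtilde n m q (2 * (kbar : ℤ) - k + 2 * (i : ℤ)) ∧
    qdown n m q lbar k ≤
        ∑ i ∈ Finset.Icc 1 m, qtilde n m q (2 * (lbar : ℤ) + k + 2 * (i : ℤ)) := by
  refine ⟨qup_le_sum_qtilde hq kbar k, ?_⟩
  rw [qdown_eq_qup_comp_neg]
  calc _ ≤ _ := qup_le_sum_qtilde (fun l h₁ h₂ => hq (-l) (by omega) (by omega)) lbar (-k)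
    _ = _ := by simp only [qtilde_comp_neg, sub_neg_eq_add]

/-- Reflection bound (general m): `q^{k̄,(n)}(k) ≤ ∑_{i=1}^{m} q̃^{(n)}(2k̄ − k + 2i)` and
`q_{l̄}^{(n)}(k) ≤ ∑_{i=1}^{m} q̃^{(n)}(2l̄ + k + 2i)` for all `−l̄ ≤ k ≤ k̄`. -/
theorem reflection_bound (n m : ℕ) (hn : 1 ≤ n) (hm : 1 ≤ m) (q : ℤ → ℝ)
    (hq : ∀ l : ℤ, -(m : ℤ) ≤ l → l ≤ (m : ℤ) → 0 ≤ q l)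
    (hsum : ∑ l ∈ Finset.Icc (-(m : ℤ)) (m : ℤ), q l = 1)
    (kbar lbar : ℕ) (k : ℤ) (hkl : -(lbar : ℤ) ≤ k) (hkk : k ≤ (kbar : ℤ)) :
    qup n m q kbar k ≤
        ∑ i ∈ Finset.Icc 1 m, qtilde n m q (2 * (kbar : ℤ) - k + 2 * (i : ℤ)) ∧
    qdown n m q lbar k ≤
        ∑ i ∈ Finset.Icc 1 m, qtilde n m q (2 * (lbar : ℤ) + k + 2 * (i : ℤ)) :=
  reflection_bound_general n m q hq kbar lbar k
end
end
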